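/- arXiv:2605.14076 — 7 statements merged into one kernel-verified Lean document; each statement's English description precedes it below -/
import Mathlib

section
/- The cycle C_5 belongs to the class W_2 (every 2 pairwise disjoint independent sets extend to 2 pairwise disjoint maximum independent sets), but C_5 is not 2-quasi-regularizable: there exists an independent set S of C_5 with |N(S)| < 2|S|. -/
open Finset
open scoped Classical

variable {V : Type*}

/-- `A` is an independent set of `G`. -/
def IsIndep (G : SimpleGraph V) (A : Finset V) : Prop :=
  ∀ u ∈ A, ∀ v ∈ A, ¬ G.Adj u v

/-- Open neighborhood of a set of vertices. -/
noncomputable def nbhd [Fintype V] (G : SimpleGraph V) (A : Finset V) : Finset V :=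
  Finset.univ.filter fun v => v ∉ A ∧ ∃ u ∈ A, G.Adj u v

/-- Independence number. -/
noncomputable def alphaNum [Fintype V] (G : SimpleGraph V) : ℕ :=
  (Finset.univ.filter fun A : Finset V => IsIndep G A).sup Finset.card

/-- Maximum independent set. -/
def IsMaxIndep [Fintype V] (G : SimpleGraph V) (S : Finset V) : Prop :=
  IsIndep G S ∧ S.card = alphaNum G

/-- The class W₂. -/
def InW2 [Fintype V] (G : SimpleGraph V) : Prop :=
  2 ≤ Fintype.card V ∧
    ∀ A B : Finset V, IsIndep G A → IsIndep G B → Disjoint A B →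
      ∃ S T : Finset V, IsMaxIndep G S ∧ IsMaxIndep G T ∧ Disjoint S T ∧ A ⊆ S ∧ B ⊆ T

/-- The class W_p. -/
def InWp [Fintype V] (G : SimpleGraph V) (p : ℕ) : Prop :=
  p ≤ Fintype.card V ∧
    ∀ A : Fin p → Finset V, (∀ i, IsIndep G (A i)) →
      (∀ i j, i ≠ j → Disjoint (A i) (A j)) →
      ∃ S : Fin p → Finset V, (∀ i, IsMaxIndep G (S i)) ∧
        (∀ i j, i ≠ j → Disjoint (S i) (S j)) ∧ ∀ i, A i ⊆ S i

/-- `l`-quasi-regularizability. -/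
def QuasiReg [Fintype V] (G : SimpleGraph V) (l : ℕ) : Prop :=
  ∀ A : Finset V, IsIndep G A → l * A.card ≤ (nbhd G A).card

/-- `s_k`: the number of independent sets of cardinality `k`. -/
noncomputable def indepCount [Fintype V] (G : SimpleGraph V) (k : ℕ) : ℕ :=
  (Finset.univ.filter fun A : Finset V => IsIndep G A ∧ A.card = k).card

/-- Closed neighborhood. -/
noncomputable def closedNbhd [Fintype V] (G : SimpleGraph V) (A : Finset V) : Finset V :=
  A ∪ nbhd G A


/-- The 5-cycle. -/
def C5 : SimpleGraph (Fin 5) := SimpleGraph.fromRel (fun u v => v = u + 1)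


instance : DecidableRel C5.Adj := fun u v =>
  decidable_of_iff (u ≠ v ∧ (v = u + 1 ∨ u = v + 1)) (by
    rw [C5, SimpleGraph.fromRel_adj])

instance (A : Finset (Fin 5)) : Decidable (IsIndep C5 A) := by
  unfold IsIndep; infer_instance

lemma c5_indep_le_two (A : Finset (Fin 5)) (h : IsIndep C5 A) : A.card ≤ 2 := by
  by_contra hc
  push_neg at hc
  obtain ⟨t, hts, htc⟩ := Finset.exists_subset_card_eq (s := A) (n := 3) hc
  obtain ⟨a, b, c, hab, hac, hbc, rfl⟩ := Finset.card_eq_three.mp htc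
  have ha := hts (by simp : a ∈ ({a,b,c} : Finset (Fin 5)))
  have hb := hts (by simp : b ∈ ({a,b,c} : Finset (Fin 5)))
  have hcc := hts (by simp : c ∈ ({a,b,c} : Finset (Fin 5)))
  have h1 := h a ha b hb
  have h2 := h a ha c hcc
  have h3 := h b hb c hcc
  revert h1 h2 h3 hab hac hbc
  clear * - ; revert a b c
  decide

lemma c5_alpha : alphaNum C5 = 2 := by
  unfold alphaNum
  apply le_antisymm
  · apply Finset.sup_le
    intro A hA
    simp only [Finset.mem_filter, Finset.mem_univ, true_and] at hA
    exact c5_indep_le_two A hA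
  · apply le_trans (by decide : (2:ℕ) ≤ ({0,2} : Finset (Fin 5)).card)
    apply Finset.le_sup
    simp only [Finset.mem_filter, Finset.mem_univ, true_and]
    decide

lemma c5_key : ∀ A B : Finset (Fin 5), IsIndep C5 A → IsIndep C5 B → Disjoint A B →
    ∃ S T : Finset (Fin 5), (IsIndep C5 S ∧ S.card = 2) ∧ (IsIndep C5 T ∧ T.card = 2) ∧
      Disjoint S T ∧ A ⊆ S ∧ B ⊆ T := by
  decide

/-- `C₅` belongs to `W₂` but is not 2-quasi-regularizable. -/
theorem c5_in_W2_not_two_quasi_regularizable :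
    InW2 C5 ∧ ∃ S : Finset (Fin 5), IsIndep C5 S ∧ (nbhd C5 S).card < 2 * S.card := by
  constructor
  · refine ⟨by simp, ?_⟩
    intro A B hA hB hAB
    obtain ⟨S, T, hS, hT, hST, hAS, hBT⟩ := c5_key A B hA hB hAB
    exact ⟨S, T, ⟨hS.1, by rw [hS.2, c5_alpha]⟩, ⟨hT.1, by rw [hT.2, c5_alpha]⟩, hST, hAS, hBT⟩
  · refine ⟨{0, 2}, by decide, ?_⟩
    have : nbhd C5 ({0, 2} : Finset (Fin 5)) = {1, 3, 4} := by
      ext v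
      simp only [nbhd, Finset.mem_filter, Finset.mem_univ, true_and]
      constructor
      · rintro ⟨hv, u, hu, hadj⟩
        revert hv hadj; fin_cases hu <;> revert v <;> decide
      · intro hv
        fin_cases hv
        · exact ⟨by decide, 0, by decide⟩
        · exact ⟨by decide, 2, by decide⟩
        · exact ⟨by decide, 0, by decide⟩
    rw [this]
    decide
end

section
/- If C is a connected graph in W_2 and C is not isomorphic to K_2, then C has no vertex of degree 1. Consequently, if C is connected, in W_2, and α(C) > 1, then the minimum degree of C is at least 2. -/
open Finset
open scoped Classical

variable {V : Type*}

lemma walk_stay {C : SimpleGraph V} {u v : V}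
    (hu : ∀ z, C.Adj u z → z = v) (hv : ∀ z, C.Adj v z → z = u) :
    ∀ {x y : V}, C.Walk x y → (x = u ∨ x = v) → (y = u ∨ y = v) := by
  intro x y p
  induction p with
  | nil => exact id
  | cons h p ih =>
    intro hx
    apply ih
    rcases hx with rfl | rfl
    · right; exact hu _ h
    · left; exact hv _ h

/-- a connected `W₂` graph other than `K₂` has no leaf; in particular,
if moreover `α(C) > 1`, the minimum degree is at least 2. -/
theorem w2_connected_no_leaf [Fintype V] (C : SimpleGraph V)
    (hconn : C.Connected) (hW2 : InW2 C)
    (hK2 : IsEmpty (C ≃g (⊤ : SimpleGraph (Fin 2)))) :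
    (∀ v : V, C.degree v ≠ 1) ∧
      (1 < alphaNum C → ∀ v : V, 2 ≤ C.degree v) := by
  classical
  have key : ∀ v : V, C.degree v ≠ 1 := by
    intro v hv
    obtain ⟨u, hu⟩ := Finset.card_eq_one.mp hv
    have hadj : ∀ z, C.Adj v z ↔ z = u := by
      intro z
      rw [← SimpleGraph.mem_neighborFinset, hu, Finset.mem_singleton]
    have hvu : C.Adj v u := (hadj u).mpr rfl
    have hvne : v ≠ u := hvu.ne
    -- u has a neighbor w ≠ v, else C ≅ K₂
    have hw : ∃ w, C.Adj u w ∧ w ≠ v := by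
      by_contra hcon
      push_neg at hcon
      have hu' : ∀ z, C.Adj u z → z = v := fun z hz => hcon z hz
      have hv' : ∀ z, C.Adj v z → z = u := fun z hz => (hadj z).mp hz
      have hall : ∀ x : V, x = u ∨ x = v := by
        intro x
        obtain ⟨p⟩ := hconn.preconnected u x
        exact walk_stay hu' hv' p (Or.inl rfl)
      have hCadj : ∀ x y : V, C.Adj x y ↔ x ≠ y := by
        intro x y
        constructor
        · exact fun h => h.ne
        · intro hne
          rcases hall x with rfl | rfl <;> rcases hall y with rfl | rfl
          · exact absurd rfl hne
          · exact hvu.symm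
          · exact hvu
          · exact absurd rfl hne
      refine hK2.elim ⟨⟨fun x => if x = u then 0 else 1,
        fun i => if i = 0 then u else v, ?_, ?_⟩, ?_⟩
      · intro x
        rcases hall x with rfl | rfl
        · simp
        · simp [hvne]
      · intro i
        fin_cases i <;> simp [hvne]
      · intro x y
        simp only [Equiv.coe_fn_mk, SimpleGraph.top_adj, hCadj]
        rcases hall x with rfl | rfl <;> rcases hall y with rfl | rfl <;>
          simp [hvne, hvne.symm]
    obtain ⟨w, huw, hwv⟩ := hw
    -- apply W₂ to {v}, {w}
    have hsing : ∀ x : V, IsIndep C {x} := by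
      intro x a ha b hb
      simp only [Finset.mem_singleton] at ha hb
      subst ha; subst hb
      exact fun h => h.ne rfl
    obtain ⟨S, T, hS, hT, hST, hvS, hwT⟩ :=
      hW2.2 {v} {w} (hsing v) (hsing w)
        (by simp [Finset.disjoint_singleton_right, hwv.symm, hwv])
    have hvS' : v ∈ S := hvS (Finset.mem_singleton_self v)
    have hwT' : w ∈ T := hwT (Finset.mem_singleton_self w)
    have hvT : v ∉ T := fun h => (Finset.disjoint_left.mp hST hvS') h
    have huT : u ∈ T := by
      by_contra huT
      have hind : IsIndep C (insert v T) := by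
        intro a ha b hb hab
        rcases Finset.mem_insert.mp ha with rfl | ha'
        · rcases Finset.mem_insert.mp hb with rfl | hb'
          · exact hab.ne rfl
          · exact huT (((hadj b).mp hab) ▸ hb')
        · rcases Finset.mem_insert.mp hb with rfl | hb'
          · exact huT (((hadj a).mp hab.symm) ▸ ha')
          · exact hT.1 a ha' b hb' hab
      have hle : (insert v T).card ≤ alphaNum C :=
        Finset.le_sup (f := Finset.card)
          (Finset.mem_filter.mpr ⟨Finset.mem_univ _, hind⟩)
      rw [Finset.card_insert_of_notMem hvT, hT.2] at hle
      omega
    exact hT.1 u huT w hwT' huw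
  refine ⟨key, fun _ v => ?_⟩
  have h0 : 0 < C.degree v := by
    have h2 := hW2.1
    obtain ⟨w, hw⟩ := Fintype.exists_ne_of_one_lt_card (by omega) v
    obtain ⟨p⟩ := hconn.preconnected v w
    cases p with
    | nil => exact absurd rfl hw
    | cons h q =>
      rw [SimpleGraph.degree_pos_iff_exists_adj]
      exact ⟨_, h⟩
  have := key v
  omega
end

section
/- Let G be a graph in W_2 and let A be an independent set with |A| < α(G). Then the localization G_A = G − N_G[A] satisfies α(G_A) = α(G) − |A|. -/
open Finset
open scoped Classical

variable {V : Type*}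

lemma card_le_alphaNum [Fintype V] (G : SimpleGraph V) {S : Finset V}
    (h : IsIndep G S) : S.card ≤ alphaNum G :=
  Finset.le_sup (Finset.mem_filter.2 ⟨Finset.mem_univ _, h⟩)

lemma exists_maxIndep [Fintype V] (G : SimpleGraph V) :
    ∃ S : Finset V, IsIndep G S ∧ S.card = alphaNum G := by
  have hne : (Finset.univ.filter fun A : Finset V => IsIndep G A).Nonempty :=
    ⟨∅, Finset.mem_filter.2 ⟨Finset.mem_univ _,
      fun u hu => (Finset.notMem_empty u hu).elim⟩⟩
  obtain ⟨S, hS, hcard⟩ := Finset.exists_mem_eq_sup _ hne Finset.card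
  exact ⟨S, (Finset.mem_filter.1 hS).2, hcard.symm⟩

/-- the localization of a `W₂` graph at a non-maximum independent set
has independence number `α(G) − |A|`. -/
theorem w2_localization_alpha [Fintype V] (G : SimpleGraph V) (hG : InW2 G)
    (A : Finset V) (hA : IsIndep G A) (hlt : A.card < alphaNum G) :
    alphaNum (G.induce {v : V | v ∉ closedNbhd G A}) = alphaNum G - A.card := by
  classical
  set s : Set V := {v : V | v ∉ closedNbhd G A} with hs
  -- get a maximum independent set S containing A
  obtain ⟨S, T, ⟨hSind, hScard⟩, _, _, hAS, _⟩ :=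
    hG.2 A ∅ hA (fun u hu => (Finset.notMem_empty u hu).elim) (Finset.disjoint_empty_right A)
  -- every element of S \ A lies in s
  have hmem : ∀ v ∈ S \ A, v ∈ s := by
    intro v hv
    obtain ⟨hvS, hvA⟩ := Finset.mem_sdiff.1 hv
    simp only [hs, Set.mem_setOf_eq, closedNbhd, Finset.mem_union, nbhd,
      Finset.mem_filter, Finset.mem_univ, true_and]
    push_neg
    refine ⟨hvA, fun h1 u hu hadj => ?_⟩
    exact hSind u (hAS hu) v hvS hadj
  -- lower bound
  have hlow : alphaNum G - A.card ≤ alphaNum (G.induce s) := by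
    have hI : IsIndep (G.induce s) ((S \ A).subtype (· ∈ s)) := by
      intro u hu v hv hadj
      have hu' := Finset.mem_sdiff.1 (Finset.mem_subtype.1 hu)
      have hv' := Finset.mem_sdiff.1 (Finset.mem_subtype.1 hv)
      exact hSind u.1 hu'.1 v.1 hv'.1 hadj
    have hcard : ((S \ A).subtype (· ∈ s)).card = alphaNum G - A.card := by
      rw [Finset.card_subtype, Finset.filter_true_of_mem hmem,
        Finset.card_sdiff_of_subset hAS, hScard]
    calc alphaNum G - A.card = ((S \ A).subtype (· ∈ s)).card := hcard.symm
      _ ≤ alphaNum (G.induce s) := card_le_alphaNum _ hI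
  -- upper bound
  have hup : alphaNum (G.induce s) ≤ alphaNum G - A.card := by
    obtain ⟨J, hJind, hJcard⟩ := exists_maxIndep (G.induce s)
    set J' : Finset V := J.image Subtype.val with hJ'
    have hJ'card : J'.card = J.card := Finset.card_image_of_injective _ Subtype.val_injective
    have hnot : ∀ v ∈ J', v ∉ closedNbhd G A := by
      intro v hv
      obtain ⟨u, hu, rfl⟩ := Finset.mem_image.1 hv
      exact u.2
    have hnotA : ∀ v ∈ J', v ∉ A := fun v hv hvA =>
      hnot v hv (Finset.mem_union_left _ hvA)
    have hnadj : ∀ v ∈ J', ∀ u ∈ A, ¬ G.Adj u v := by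
      intro v hv u hu hadj
      exact hnot v hv (Finset.mem_union_right _
        (Finset.mem_filter.2 ⟨Finset.mem_univ _, hnotA v hv, u, hu, hadj⟩))
    have hind : IsIndep G (J' ∪ A) := by
      intro u hu v hv hadj
      rcases Finset.mem_union.1 hu with hu' | hu' <;>
        rcases Finset.mem_union.1 hv with hv' | hv'
      · obtain ⟨a, ha, rfl⟩ := Finset.mem_image.1 hu'
        obtain ⟨b, hb, rfl⟩ := Finset.mem_image.1 hv'
        exact hJind a ha b hb hadj
      · exact hnadj u hu' v hv' hadj.symm
      · exact hnadj v hv' u hu' hadj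
      · exact hA u hu' v hv' hadj
    have hdisj : Disjoint J' A := Finset.disjoint_left.2 hnotA
    have := card_le_alphaNum G hind
    rw [Finset.card_union_of_disjoint hdisj, hJ'card, hJcard] at this
    omega
  exact le_antisymm hup hlow
end

section
/- Let G be a graph in W_2 and let A be an independent set with |A| < α(G). Then the localization G_A = G − N_G[A] again belongs to W_2. -/
open Finset
open scoped Classical

variable {V : Type*}

lemma indep_empty (G : SimpleGraph V) : IsIndep G ∅ := by
  intro u hu; simp at hu

lemma indep_mono {G : SimpleGraph V} {S C : Finset V} (hS : IsIndep G S) (hCS : C ⊆ S) :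
    IsIndep G C := fun u hu v hv => hS u (hCS hu) v (hCS hv)

lemma card_le_alpha [Fintype V] {G : SimpleGraph V} {B : Finset V} (h : IsIndep G B) :
    B.card ≤ alphaNum G :=
  Finset.le_sup (by simp [h])

/-- the localization of a `W₂` graph at a non-maximum independent set
again belongs to `W₂`. -/
theorem w2_localization_in_w2 [Fintype V] (G : SimpleGraph V) (hG : InW2 G)
    (A : Finset V) (hA : IsIndep G A) (hlt : A.card < alphaNum G) :
    InW2 (G.induce {v : V | v ∉ closedNbhd G A}) := by
  classical
  obtain ⟨-, hW⟩ := hG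
  set P : Set V := {v : V | v ∉ closedNbhd G A} with hPdef
  have hmemP : ∀ v : V, v ∈ P ↔ v ∉ A ∧ ∀ u ∈ A, ¬ G.Adj u v := by
    intro v
    simp only [hPdef, Set.mem_setOf_eq, closedNbhd, nbhd, Finset.mem_union,
      Finset.mem_filter, Finset.mem_univ, true_and, not_or, not_and, not_exists]
    tauto
  have hunion : ∀ B : Finset V, IsIndep G B → (∀ v ∈ B, v ∈ P) → IsIndep G (A ∪ B) := by
    intro B hB hBP u hu v hv hadj
    rcases Finset.mem_union.1 hu with hu | hu <;> rcases Finset.mem_union.1 hv with hv | hv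
    · exact hA u hu v hv hadj
    · exact ((hmemP v).1 (hBP v hv)).2 u hu hadj
    · exact ((hmemP u).1 (hBP u hu)).2 v hv hadj.symm
    · exact hB u hu v hv hadj
  have hdisjA : ∀ B : Finset V, (∀ v ∈ B, v ∈ P) → Disjoint A B := fun B hBP =>
    Finset.disjoint_left.2 fun v hvA hvB => ((hmemP v).1 (hBP v hvB)).1 hvA
  have hsd : ∀ S : Finset V, IsMaxIndep G S → A ⊆ S →
      (∀ v ∈ S \ A, v ∈ P) ∧ (S \ A).card = alphaNum G - A.card := by
    intro S hS hAS
    constructor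
    · intro v hv
      rcases Finset.mem_sdiff.1 hv with ⟨hvS, hvA⟩
      exact (hmemP v).2 ⟨hvA, fun u hu hadj => hS.1 u (hAS hu) v hvS hadj⟩
    · rw [Finset.card_sdiff_of_subset hAS, hS.2]
  -- lifting finsets of V contained in P to finsets of the subtype
  have hliftmem : ∀ (C : Finset V) (x : ↥P),
      x ∈ C.subtype (fun v => v ∈ P) ↔ (x : V) ∈ C := by
    intro C x; simp [Finset.mem_subtype]
  have hliftcard : ∀ C : Finset V, (∀ v ∈ C, v ∈ P) →
      (C.subtype (fun v => v ∈ P)).card = C.card := by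
    intro C hC
    rw [Finset.card_subtype, Finset.filter_true_of_mem hC]
  have hliftindep : ∀ C : Finset V, IsIndep G C →
      IsIndep (G.induce P) (C.subtype (fun v => v ∈ P)) := by
    intro C hC x hx y hy hadj
    exact hC x ((hliftmem C x).1 hx) y ((hliftmem C y).1 hy) hadj
  -- images of finsets of the subtype
  have himgmem : ∀ B : Finset ↥P, ∀ v ∈ B.image (fun x : ↥P => (x : V)), v ∈ P := by
    intro B v hv
    rcases Finset.mem_image.1 hv with ⟨x, hx, rfl⟩
    exact x.2
  have himgindep : ∀ B : Finset ↥P, IsIndep (G.induce P) B →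
      IsIndep G (B.image (fun x : ↥P => (x : V))) := by
    intro B hB u hu v hv hadj
    rcases Finset.mem_image.1 hu with ⟨x, hx, rfl⟩
    rcases Finset.mem_image.1 hv with ⟨y, hy, rfl⟩
    exact hB x hx y hy hadj
  -- a maximum independent set containing A exists
  obtain ⟨S₀, T₀, hS₀, hT₀, hST₀, hAS₀, -⟩ :=
    hW A ∅ hA (indep_empty G) (Finset.disjoint_empty_right A)
  have hαle : alphaNum G - A.card ≤ alphaNum (G.induce P) := by
    have h1 := hliftindep (S₀ \ A) (indep_mono hS₀.1 (Finset.sdiff_subset))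
    have h2 := card_le_alpha h1
    rwa [hliftcard _ (hsd S₀ hS₀ hAS₀).1, (hsd S₀ hS₀ hAS₀).2] at h2
  have hαge : alphaNum (G.induce P) ≤ alphaNum G - A.card := by
    obtain ⟨S', hS', hcard⟩ := Finset.exists_mem_eq_sup
      (Finset.univ.filter fun B : Finset ↥P => IsIndep (G.induce P) B)
      ⟨∅, by simp [indep_empty]⟩ Finset.card
    have hS'i : IsIndep (G.induce P) S' := (Finset.mem_filter.1 hS').2
    set B := S'.image (fun x : ↥P => (x : V)) with hB
    have hBcard : B.card = S'.card := Finset.card_image_of_injective _ Subtype.val_injective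
    have h3 : (A ∪ B).card ≤ alphaNum G := card_le_alpha (hunion B (himgindep S' hS'i) (himgmem S'))
    rw [Finset.card_union_of_disjoint (hdisjA B (himgmem S'))] at h3
    have hc2 : alphaNum (G.induce P) = S'.card := hcard
    omega
  have hα : alphaNum (G.induce P) = alphaNum G - A.card := le_antisymm hαge hαle
  have hmax : ∀ S : Finset V, IsMaxIndep G S → A ⊆ S →
      IsMaxIndep (G.induce P) ((S \ A).subtype (fun v => v ∈ P)) := by
    intro S hS hAS
    refine ⟨hliftindep _ (indep_mono hS.1 (Finset.sdiff_subset)), ?_⟩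
    rw [hliftcard _ (hsd S hS hAS).1, (hsd S hS hAS).2, hα]
  constructor
  · -- at least two vertices outside the closed neighborhood
    have hpos : 0 < alphaNum G - A.card := by omega
    have hv : ∃ v, v ∈ S₀ \ A := Finset.card_pos.1 (by rw [(hsd S₀ hS₀ hAS₀).2]; exact hpos)
    obtain ⟨v, hv⟩ := hv
    have hvP : v ∈ P := (hsd S₀ hS₀ hAS₀).1 v hv
    have hvind : IsIndep G {v} := by
      intro a ha b hb hadj
      rw [Finset.mem_singleton] at ha hb
      subst ha; subst hb; exact G.irrefl hadj
    obtain ⟨S₁, S₂, hS₁, hS₂, hST, hAS₁, hvS₂⟩ := hW A {v} hA hvind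
      (Finset.disjoint_singleton_right.2 ((hmemP v).1 hvP).1)
    have hu : ∃ u, u ∈ S₁ \ A := Finset.card_pos.1 (by rw [(hsd S₁ hS₁ hAS₁).2]; exact hpos)
    obtain ⟨u, hu⟩ := hu
    have huP : u ∈ P := (hsd S₁ hS₁ hAS₁).1 u hu
    have hne : u ≠ v := by
      intro h
      exact Finset.disjoint_left.1 hST (Finset.mem_sdiff.1 hu).1
        (h ▸ hvS₂ (Finset.mem_singleton_self v))
    exact Fintype.one_lt_card_iff.2 ⟨⟨u, huP⟩, ⟨v, hvP⟩, by simp [hne]⟩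
  · intro A₁' A₂' h₁' h₂' hdisj'
    set A₁ := A₁'.image (fun x : ↥P => (x : V)) with hA₁
    set A₂ := A₂'.image (fun x : ↥P => (x : V)) with hA₂
    have hA₁₂ : Disjoint A₁ A₂ := by
      refine Finset.disjoint_left.2 fun v hv1 hv2 => ?_
      rcases Finset.mem_image.1 hv1 with ⟨x, hx, rfl⟩
      rcases Finset.mem_image.1 hv2 with ⟨y, hy, hxy⟩
      have : y = x := Subtype.val_injective hxy
      exact Finset.disjoint_left.1 hdisj' hx (this ▸ hy)
    obtain ⟨S₁, S₂, hS₁, hS₂, hST, hAS₁, hAS₂⟩ :=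
      hW (A ∪ A₁) A₂ (hunion A₁ (himgindep A₁' h₁') (himgmem A₁')) (himgindep A₂' h₂')
        (Finset.disjoint_union_left.2 ⟨hdisjA A₂ (himgmem A₂'), hA₁₂⟩)
    have hAsubS₁ : A ⊆ S₁ := (Finset.union_subset_iff.1 hAS₁).1
    set T₁ := S₁ \ A with hT₁
    have hT₁S₂ : Disjoint A₂ T₁ := Finset.disjoint_left.2 fun v hv hvT =>
      Finset.disjoint_left.1 hST (Finset.mem_sdiff.1 hvT).1 (hAS₂ hv)
    obtain ⟨U₁, U₂, hU₁, hU₂, hUU, hAU₁, hTU₂⟩ :=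
      hW (A ∪ A₂) T₁ (hunion A₂ (himgindep A₂' h₂') (himgmem A₂'))
        (indep_mono hS₁.1 Finset.sdiff_subset)
        (Finset.disjoint_union_left.2 ⟨Finset.disjoint_sdiff, hT₁S₂⟩)
    have hAsubU₁ : A ⊆ U₁ := (Finset.union_subset_iff.1 hAU₁).1
    set T₂ := U₁ \ A with hT₂
    have hT₁T₂ : Disjoint T₁ T₂ := Finset.disjoint_left.2 fun v hv1 hv2 =>
      Finset.disjoint_left.1 hUU (Finset.mem_sdiff.1 hv2).1 (hTU₂ hv1)
    refine ⟨T₁.subtype (fun v => v ∈ P), T₂.subtype (fun v => v ∈ P),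
      hmax S₁ hS₁ hAsubS₁, hmax U₁ hU₁ hAsubU₁, ?_, ?_, ?_⟩
    · exact Finset.disjoint_left.2 fun x hx1 hx2 =>
        Finset.disjoint_left.1 hT₁T₂ ((hliftmem T₁ x).1 hx1) ((hliftmem T₂ x).1 hx2)
    · intro x hx
      refine (hliftmem T₁ x).2 (Finset.mem_sdiff.2 ⟨?_, ?_⟩)
      · exact hAS₁ (Finset.mem_union_right A (Finset.mem_image.2 ⟨x, hx, rfl⟩))
      · exact ((hmemP x).1 x.2).1
    · intro x hx
      refine (hliftmem T₂ x).2 (Finset.mem_sdiff.2 ⟨?_, ?_⟩)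
      · exact hAU₁ (Finset.mem_union_right A (Finset.mem_image.2 ⟨x, hx, rfl⟩))
      · exact ((hmemP x).1 x.2).1
end

section
/- Let G be a λ-quasi-regularizable graph of order n with independence number α, and let s_k denote the number of independent sets of size k in G. Then (k+1)s_{k+1} ≤ (n − (λ+1)k) s_k for all 0 ≤ k ≤ α − 1. -/
open Finset
open scoped Classical

variable {V : Type*}

lemma indep_subset {G : SimpleGraph V} {A B : Finset V} (h : IsIndep G B) (hs : A ⊆ B) :
    IsIndep G A := fun u hu v hv => h u (hs hu) v (hs hv)

lemma exists_indep_card [Fintype V] (G : SimpleGraph V) {k : ℕ} (hk : k ≤ alphaNum G) :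
    ∃ A : Finset V, IsIndep G A ∧ A.card = k := by
  have hne : (Finset.univ.filter fun A : Finset V => IsIndep G A).Nonempty :=
    ⟨∅, Finset.mem_filter.2 ⟨Finset.mem_univ _, by simp [IsIndep]⟩⟩
  obtain ⟨A₀, hA₀, hcard⟩ := Finset.exists_mem_eq_sup _ hne Finset.card
  rw [Finset.mem_filter] at hA₀
  rw [alphaNum, hcard] at hk
  obtain ⟨A, hsub, hAc⟩ := Finset.exists_subset_card_eq hk
  exact ⟨A, indep_subset hA₀.2 hsub, hAc⟩

lemma closedNbhd_card_le [Fintype V] {G : SimpleGraph V} {lam : ℕ} (hqr : QuasiReg G lam)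
    {A : Finset V} (hA : IsIndep G A) :
    (lam + 1) * A.card ≤ (closedNbhd G A).card := by
  have hdisj : Disjoint A (nbhd G A) := by
    rw [Finset.disjoint_left]
    intro a ha hb
    exact (Finset.mem_filter.1 hb).2.1 ha
  rw [closedNbhd, Finset.card_union_of_disjoint hdisj, add_mul, one_mul]
  exact (add_le_add (hqr A hA) le_rfl).trans_eq (add_comm _ _)

/-- coefficient inequality for λ-quasi-regularizable graphs. -/
theorem quasireg_coeff_inequality [Fintype V] (G : SimpleGraph V)
    (lam : ℕ) (hlam : 0 < lam) (hqr : QuasiReg G lam) :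
    ∀ k : ℕ, k + 1 ≤ alphaNum G →
      ((k : ℤ) + 1) * indepCount G (k + 1) ≤
        ((Fintype.card V : ℤ) - (lam + 1) * k) * indepCount G k := by
  intro k hk
  set n := Fintype.card V with hn
  set Sk1 := Finset.univ.filter (fun A : Finset V => IsIndep G A ∧ A.card = k + 1) with hSk1
  set Sk := Finset.univ.filter (fun A : Finset V => IsIndep G A ∧ A.card = k) with hSkdef
  obtain ⟨A₀, hA₀i, hA₀c⟩ := exists_indep_card G (le_trans (Nat.le_succ k) hk)
  have hnk : (lam + 1) * k ≤ n := by
    calc (lam + 1) * k = (lam + 1) * A₀.card := by rw [hA₀c]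
    _ ≤ (closedNbhd G A₀).card := closedNbhd_card_le hqr hA₀i
    _ ≤ n := Finset.card_le_univ _
  set P := Sk1.sigma (fun B => B) with hP
  set Q := Sk.sigma (fun A => Finset.univ \ closedNbhd G A) with hQ
  have hPcard : P.card = (k + 1) * Sk1.card := by
    rw [hP, Finset.card_sigma]
    rw [Finset.sum_congr rfl (fun B hB => ((Finset.mem_filter.1 hB).2.2 : B.card = k + 1))]
    rw [Finset.sum_const, smul_eq_mul, mul_comm]
  have hQcard : Q.card ≤ Sk.card * (n - (lam + 1) * k) := by
    rw [hQ, Finset.card_sigma]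
    calc ∑ A ∈ Sk, (Finset.univ \ closedNbhd G A).card
        ≤ ∑ _A ∈ Sk, (n - (lam + 1) * k) := by
          apply Finset.sum_le_sum
          intro A hA
          obtain ⟨hAi, hAc⟩ := (Finset.mem_filter.1 hA).2
          rw [Finset.card_sdiff_of_subset (Finset.subset_univ _), Finset.card_univ]
          exact Nat.sub_le_sub_left (hAc ▸ closedNbhd_card_le hqr hAi) n
      _ = Sk.card * (n - (lam + 1) * k) := by rw [Finset.sum_const, smul_eq_mul]
  have hinj : P.card ≤ Q.card := by
    apply Finset.card_le_card_of_injOn (fun p => ⟨p.1.erase p.2, p.2⟩)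
    · intro p hp
      rw [Finset.mem_coe, hP, Finset.mem_sigma] at hp
      obtain ⟨hB, ha⟩ := hp
      obtain ⟨hBi, hBc⟩ := (Finset.mem_filter.1 hB).2
      rw [Finset.mem_coe, hQ, Finset.mem_sigma]
      constructor
      · rw [hSkdef, Finset.mem_filter]
        refine ⟨Finset.mem_univ _, indep_subset hBi (Finset.erase_subset _ _), ?_⟩
        rw [Finset.card_erase_of_mem ha, hBc]; rfl
      · rw [Finset.mem_sdiff]
        refine ⟨Finset.mem_univ _, ?_⟩
        rw [closedNbhd, Finset.mem_union]
        rintro (h | h)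
        · exact Finset.notMem_erase _ _ h
        · obtain ⟨u, hu, hadj⟩ := (Finset.mem_filter.1 h).2.2
          exact hBi u (Finset.mem_of_mem_erase hu) p.2 ha hadj
    · intro p hp q hq hfpq
      simp only [Finset.mem_coe, hP, Finset.mem_sigma] at hp hq
      have h2 : p.2 = q.2 := congrArg Sigma.snd hfpq
      have h1 : p.1.erase p.2 = q.1.erase q.2 := by
        have := congrArg Sigma.fst hfpq
        simpa using this
      have hp1 : p.1 = q.1 := by
        rw [← Finset.insert_erase hp.2, ← Finset.insert_erase hq.2, h1, h2]
      exact Sigma.ext hp1 (by rw [h2])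
  have hnat : (k + 1) * indepCount G (k + 1) ≤ (n - (lam + 1) * k) * indepCount G k := by
    have h := hPcard ▸ (hinj.trans hQcard)
    simpa [indepCount, hSk1, hSkdef, mul_comm] using h
  have hz := (Nat.cast_le (α := ℤ)).2 hnat
  push_cast [Nat.cast_sub hnk] at hz
  convert hz using 2 <;> push_cast <;> ring
end

section
/- Let n, α, p be positive integers with α ≥ 2, α(α−1)/(α+1) ≤ p, pα + 2√(pα+p) < n, and n ≤ ((α²+1)p + (α−1)²)/(α−1). Then the quadratic f(k) = k² − (n−pα)k + pα + p satisfies f(k) ≥ 0 for every integer 1 ≤ k ≤ α−1. -/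
/-- second (positive-discriminant) interval. -/
theorem quadratic_nonneg_second_interval (n a p : ℕ)
    (hn : 0 < n) (ha : 2 ≤ a) (hp : 0 < p)
    (h1 : (a : ℝ) * ((a : ℝ) - 1) / ((a : ℝ) + 1) ≤ (p : ℝ))
    (h2 : (p : ℝ) * a + 2 * Real.sqrt ((p : ℝ) * a + p) < (n : ℝ))
    (h3 : (n : ℝ) ≤ (((a : ℝ) ^ 2 + 1) * p + ((a : ℝ) - 1) ^ 2) / ((a : ℝ) - 1)) :
    ∀ k : ℕ, 1 ≤ k → k ≤ a - 1 →
      0 ≤ (k : ℝ) ^ 2 - ((n : ℝ) - (p : ℝ) * a) * (k : ℝ) + ((p : ℝ) * a + p) := by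
  intro k hk1 hk2
  have haR : (2 : ℝ) ≤ (a : ℝ) := by exact_mod_cast ha
  have hA1 : (0 : ℝ) < (a : ℝ) - 1 := by linarith
  have hA2 : (0 : ℝ) < (a : ℝ) + 1 := by linarith
  have hkR : (k : ℝ) + 1 ≤ (a : ℝ) := by
    have : k + 1 ≤ a := by omega
    exact_mod_cast this
  have hk1R : (1 : ℝ) ≤ (k : ℝ) := by exact_mod_cast hk1
  have h1' : (a : ℝ) * ((a : ℝ) - 1) ≤ (p : ℝ) * ((a : ℝ) + 1) := by
    rw [div_le_iff₀ hA2] at h1; linarith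
  have h3' : (n : ℝ) * ((a : ℝ) - 1) ≤ ((a : ℝ) ^ 2 + 1) * p + ((a : ℝ) - 1) ^ 2 := by
    rw [le_div_iff₀ hA1] at h3; linarith
  -- k * h3'
  have h3k : (k : ℝ) * ((n : ℝ) * ((a : ℝ) - 1)) ≤
      (k : ℝ) * (((a : ℝ) ^ 2 + 1) * p + ((a : ℝ) - 1) ^ 2) := by
    apply mul_le_mul_of_nonneg_left h3' (by linarith)
  have hC : (k : ℝ) * ((a : ℝ) - 1) ≤ (p : ℝ) * ((a : ℝ) + 1) := by
    nlinarith
  have key : 0 ≤ ((a : ℝ) - 1 - k) * ((p : ℝ) * ((a : ℝ) + 1) - (k : ℝ) * ((a : ℝ) - 1)) := by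
    apply mul_nonneg (by linarith) (by linarith)
  nlinarith [mul_pos hA1 hA1]
end

section
/- Let G be a connected W_2 graph in which a non-maximum independent set A of minimum size a among violations satisfies |N_G(A)| < 2|A|. Then |N_G(A)| = 2a − 1, and every vertex x ∈ A has exactly one private neighbor, i.e. |N_G(x) \ N_G(A \ {x})| = 1. -/
open Finset
open scoped Classical

variable {V : Type*}

lemma indep_card_le_alpha {V : Type} [Fintype V] (G : SimpleGraph V) {B : Finset V}
    (hB : IsIndep G B) : B.card ≤ alphaNum G :=
  Finset.le_sup (Finset.mem_filter.mpr ⟨Finset.mem_univ _, hB⟩)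

lemma mem_nbhd {V : Type} [Fintype V] (G : SimpleGraph V) (A : Finset V) (v : V) :
    v ∈ nbhd G A ↔ v ∉ A ∧ ∃ u ∈ A, G.Adj u v := by
  simp [nbhd]

lemma nbhd_decomp {V : Type} [Fintype V] (G : SimpleGraph V) {A : Finset V}
    (hA : IsIndep G A) {x : V} (hx : x ∈ A) :
    nbhd G A = nbhd G (A.erase x) ∪ (G.neighborFinset x \ nbhd G (A.erase x)) := by
  ext v
  simp only [Finset.mem_union, mem_nbhd, Finset.mem_sdiff, SimpleGraph.mem_neighborFinset]
  constructor
  · rintro ⟨hvA, u, huA, huv⟩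
    by_cases hv : ∃ u' ∈ A.erase x, G.Adj u' v
    · exact Or.inl ⟨fun hc => hvA (Finset.mem_of_mem_erase hc), hv⟩
    · have hux : u = x := by
        by_contra hne
        exact hv ⟨u, Finset.mem_erase.mpr ⟨hne, huA⟩, huv⟩
      exact Or.inr ⟨hux ▸ huv, fun ⟨_, h⟩ => hv h⟩
  · rintro (⟨hvE, u, huE, huv⟩ | ⟨hxv, _⟩)
    · have huA : u ∈ A := Finset.mem_of_mem_erase huE
      have hvA : v ∉ A := by
        intro hvA
        have hvx : v = x := by
          by_contra hne
          exact hvE (Finset.mem_erase.mpr ⟨hne, hvA⟩)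
        exact hA u huA v hvA huv
      exact ⟨hvA, u, huA, huv⟩
    · have hvA : v ∉ A := fun hvA => hA x hx v hvA hxv
      exact ⟨hvA, x, hx, hxv⟩

lemma private_nonempty {V : Type} [Fintype V] (G : SimpleGraph V) (hW2 : InW2 G)
    {A : Finset V} (hA : IsIndep G A) {x : V} (hx : x ∈ A) :
    (G.neighborFinset x \ nbhd G (A.erase x)).Nonempty := by
  by_contra h
  rw [Finset.not_nonempty_iff_eq_empty, Finset.sdiff_eq_empty_iff_subset] at h
  have hsub : ∀ v, G.Adj x v → ∃ u ∈ A.erase x, G.Adj u v := by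
    intro v hv
    have := h (SimpleGraph.mem_neighborFinset .. |>.mpr hv)
    exact ((mem_nbhd ..).mp this).2
  have hindx : IsIndep G {x} := by
    intro u hu v hv
    rw [Finset.mem_singleton] at hu hv
    subst hu; subst hv
    exact G.irrefl
  have hindE : IsIndep G (A.erase x) := fun u hu v hv =>
    hA u (Finset.mem_of_mem_erase hu) v (Finset.mem_of_mem_erase hv)
  have hdisj : Disjoint ({x} : Finset V) (A.erase x) := by
    simp [Finset.disjoint_left]
  obtain ⟨S, T, hS, hT, hST, hxS, hAT⟩ := hW2.2 {x} (A.erase x) hindx hindE hdisj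
  have hxT : x ∉ T :=
    Finset.disjoint_left.mp hST (hxS (Finset.mem_singleton_self x))
  have hInd : IsIndep G (insert x T) := by
    intro u hu v hv huv
    rw [Finset.mem_insert] at hu hv
    rcases hu with rfl | hu
    · rcases hv with rfl | hv
      · exact G.irrefl huv
      · obtain ⟨w, hwE, hwv⟩ := hsub v huv
        exact hT.1 w (hAT hwE) v hv hwv
    · rcases hv with rfl | hv
      · obtain ⟨w, hwE, hwu⟩ := hsub u huv.symm
        exact hT.1 w (hAT hwE) u hu hwu
      · exact hT.1 u hu v hv huv
  have hle := indep_card_le_alpha G hInd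
  rw [Finset.card_insert_of_notMem hxT, hT.2] at hle
  omega

/-- in a minimal violation of the expansion inequality in a connected
`W₂` graph, the deficiency is exactly one and every vertex of `A` has exactly one
private neighbor. -/
theorem minimal_violation_structure {V : Type} [Fintype V] (G : SimpleGraph V)
    (hconn : G.Connected) (hW2 : InW2 G)
    (A : Finset V) (hA : IsIndep G A) (hlt : A.card < alphaNum G)
    (hviol : (nbhd G A).card < 2 * A.card)
    (hmin : ∀ (W : Type) [Fintype W] (G' : SimpleGraph W) (A' : Finset W),
      G'.Connected → InW2 G' → IsIndep G' A' → A'.card < alphaNum G' →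
      A'.card < A.card → 2 * A'.card ≤ (nbhd G' A').card) :
    (nbhd G A).card = 2 * A.card - 1 ∧
      ∀ x ∈ A, (G.neighborFinset x \ nbhd G (A.erase x)).card = 1 := by
  have ha1 : 1 ≤ A.card := by omega
  have key : ∀ x ∈ A,
      (nbhd G A).card
        = (nbhd G (A.erase x)).card + (G.neighborFinset x \ nbhd G (A.erase x)).card ∧
      2 * (A.card - 1) ≤ (nbhd G (A.erase x)).card ∧
      1 ≤ (G.neighborFinset x \ nbhd G (A.erase x)).card := by
    intro x hx
    refine ⟨?_, ?_, ?_⟩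
    · rw [nbhd_decomp G hA hx,
        Finset.card_union_of_disjoint Finset.disjoint_sdiff]
    · have hindE : IsIndep G (A.erase x) := fun u hu v hv =>
        hA u (Finset.mem_of_mem_erase hu) v (Finset.mem_of_mem_erase hv)
      have hcard : (A.erase x).card = A.card - 1 := Finset.card_erase_of_mem hx
      have := hmin V G (A.erase x) hconn hW2 hindE
        (by rw [hcard]; omega) (by rw [hcard]; omega)
      rwa [hcard] at this
    · exact Finset.card_pos.mpr (private_nonempty G hW2 hA hx)
  obtain ⟨x0, hx0⟩ := Finset.card_pos.mp ha1
  obtain ⟨e0, h0, p0⟩ := key x0 hx0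
  have hNA : (nbhd G A).card = 2 * A.card - 1 := by omega
  refine ⟨hNA, fun x hx => ?_⟩
  obtain ⟨e, h, p⟩ := key x hx
  omega
end
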